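/- arXiv:2401.01054 — 10 statements merged into one kernel-verified Lean document; each statement's English description precedes it below -/
import Mathlib

section
/- Let H be a real inner product space, I a finite nonempty index set, g : I → H a family of vectors, and σ : I → ℝ with σ_i > 0 for all i. If there is no d ∈ H with ⟨g_i, d⟩ < 0 for all i ∈ I, then the pair (d, α) = (0, 0) minimizes α + (1/2)‖d‖² over all feasible pairs of the elastic steepest descent problem, and moreover every minimizer (d*, α*) of the problem satisfies d* = 0 and α* = 0. -/
open RealInnerProductSpace

/-- if there is no common descent direction, then `(0, 0)` is feasible and
minimizes `α + (1/2)‖d‖²` over all feasible pairs of the elastic steepest descent problem,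
and every minimizer `(d*, α*)` satisfies `d* = 0` and `α* = 0`. -/
theorem stmt_0 {H : Type*} [NormedAddCommGroup H] [InnerProductSpace ℝ H]
    {I : Type*} [Fintype I] [Nonempty I]
    (g : I → H) (σ : I → ℝ) (hσ : ∀ i, 0 < σ i)
    (hno : ¬ ∃ d : H, ∀ i, ⟪g i, d⟫ < 0) :
    ((∀ i, ⟪g i, (0 : H)⟫ ≤ σ i * (0 : ℝ)) ∧
      ∀ (d : H) (α : ℝ), (∀ i, ⟪g i, d⟫ ≤ σ i * α) →
        (0 : ℝ) + (1 / 2) * ‖(0 : H)‖ ^ 2 ≤ α + (1 / 2) * ‖d‖ ^ 2) ∧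
    (∀ (dstar : H) (αstar : ℝ),
      (∀ i, ⟪g i, dstar⟫ ≤ σ i * αstar) →
      (∀ (d : H) (α : ℝ), (∀ i, ⟪g i, d⟫ ≤ σ i * α) →
        αstar + (1 / 2) * ‖dstar‖ ^ 2 ≤ α + (1 / 2) * ‖d‖ ^ 2) →
      dstar = 0 ∧ αstar = 0) := by
  have feas0 : ∀ i, ⟪g i, (0 : H)⟫ ≤ σ i * (0 : ℝ) := by
    intro i; simp [inner_zero_right]
  have key : ∀ (d : H) (α : ℝ), (∀ i, ⟪g i, d⟫ ≤ σ i * α) → 0 ≤ α := by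
    intro d α hfeas
    by_contra h
    push_neg at h
    exact hno ⟨d, fun i => lt_of_le_of_lt (hfeas i)
      (mul_neg_of_pos_of_neg (hσ i) h)⟩
  refine ⟨⟨feas0, fun d α hfeas => ?_⟩, fun dstar αstar hfeas hmin => ?_⟩
  · have := key d α hfeas
    have h2 : 0 ≤ (1 / 2 : ℝ) * ‖d‖ ^ 2 := by positivity
    simp only [norm_zero]
    nlinarith
  · have h1 : 0 ≤ αstar := key dstar αstar hfeas
    have h2 := hmin 0 0 feas0
    simp only [norm_zero] at h2
    have h3 : 0 ≤ (1 / 2 : ℝ) * ‖dstar‖ ^ 2 := by positivity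
    have hd : ‖dstar‖ ^ 2 = 0 := by nlinarith
    constructor
    · simpa using norm_eq_zero.mp (by nlinarith [sq_abs ‖dstar‖] : ‖dstar‖ = 0)
    · nlinarith
end

section
/- Let H be a real inner product space, I a finite nonempty index set, g : I → H, and σ : I → ℝ with σ_i > 0 for all i. If there exists d₀ ∈ H with ⟨g_i, d₀⟩ < 0 for all i ∈ I, then the infimum of α + (1/2)‖d‖² over feasible pairs of the elastic steepest descent problem is strictly negative, and every minimizer (d*, α*) satisfies α* ≤ −(1/2)‖d*‖² < 0 (in particular d* ≠ 0) and ⟨g_i, d*⟩ ≤ σ_i · α* < 0 for all i ∈ I. -/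
open RealInnerProductSpace

/-- if a common descent direction exists, then the infimum of the elastic
steepest descent problem is strictly negative (there is a feasible pair with negative value),
and every minimizer `(d*, α*)` satisfies `α* ≤ -(1/2)‖d*‖² < 0` (so `d* ≠ 0`) and
`⟪g i, d*⟫ ≤ σ i * α* < 0` for all `i`. -/
theorem stmt_1 {H : Type*} [NormedAddCommGroup H] [InnerProductSpace ℝ H]
    {I : Type*} [Fintype I] [Nonempty I]
    (g : I → H) (σ : I → ℝ) (hσ : ∀ i, 0 < σ i)
    (hd₀ : ∃ d₀ : H, ∀ i, ⟪g i, d₀⟫ < 0) :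
    (∃ (d : H) (α : ℝ), (∀ i, ⟪g i, d⟫ ≤ σ i * α) ∧
      α + (1 / 2) * ‖d‖ ^ 2 < 0) ∧
    (∀ (dstar : H) (αstar : ℝ),
      (∀ i, ⟪g i, dstar⟫ ≤ σ i * αstar) →
      (∀ (d : H) (α : ℝ), (∀ i, ⟪g i, d⟫ ≤ σ i * α) →
        αstar + (1 / 2) * ‖dstar‖ ^ 2 ≤ α + (1 / 2) * ‖d‖ ^ 2) →
      (αstar ≤ -(1 / 2) * ‖dstar‖ ^ 2 ∧ -(1 / 2) * ‖dstar‖ ^ 2 < 0) ∧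
      dstar ≠ 0 ∧
      (∀ i, ⟪g i, dstar⟫ ≤ σ i * αstar ∧ σ i * αstar < 0)) := by
  obtain ⟨d₀, h₀⟩ := hd₀
  -- c := max over i of ⟪g i, d₀⟫ / σ i, which is < 0
  set c : ℝ := Finset.univ.sup' Finset.univ_nonempty (fun i => ⟪g i, d₀⟫ / σ i) with hc
  have hclt : c < 0 := by
    rw [Finset.sup'_lt_iff]
    intro i _
    exact div_neg_of_neg_of_pos (h₀ i) (hσ i)
  have hcle : ∀ i, ⟪g i, d₀⟫ ≤ σ i * c := by
    intro i
    have := Finset.le_sup' (fun i => ⟪g i, d₀⟫ / σ i) (Finset.mem_univ i)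
    rw [div_le_iff₀ (hσ i)] at this
    linarith [this]
  set t : ℝ := -c / (‖d₀‖ ^ 2 + 1) with ht
  have hden : (0:ℝ) < ‖d₀‖ ^ 2 + 1 := by positivity
  have htpos : 0 < t := div_pos (by linarith) hden
  have hfeas : ∀ i, ⟪g i, t • d₀⟫ ≤ σ i * (t * c) := by
    intro i
    rw [real_inner_smul_right]
    calc t * ⟪g i, d₀⟫ ≤ t * (σ i * c) :=
          mul_le_mul_of_nonneg_left (hcle i) htpos.le
      _ = σ i * (t * c) := by ring
  have hnorm : ‖t • d₀‖ ^ 2 = t ^ 2 * ‖d₀‖ ^ 2 := by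
    rw [norm_smul, Real.norm_eq_abs, mul_pow, sq_abs]
  have hval : t * c + (1 / 2) * ‖t • d₀‖ ^ 2 < 0 := by
    rw [hnorm]
    have h1 : t * (‖d₀‖ ^ 2 + 1) = -c := div_mul_cancel₀ _ hden.ne'
    nlinarith [sq_nonneg t, norm_nonneg d₀, sq_nonneg ‖d₀‖]
  refine ⟨⟨t • d₀, t * c, hfeas, hval⟩, ?_⟩
  intro dstar αstar hfs hmin
  have hzero : αstar + (1 / 2) * ‖dstar‖ ^ 2 ≤ 0 := by
    have := hmin 0 0 (fun i => by rw [inner_zero_right, mul_zero])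
    simpa using this
  have hneg : αstar + (1 / 2) * ‖dstar‖ ^ 2 < 0 := lt_of_le_of_lt (hmin _ _ hfeas) hval
  have hαneg : αstar < 0 := by nlinarith [sq_nonneg ‖dstar‖]
  have hdne : dstar ≠ 0 := by
    intro h
    obtain ⟨i⟩ := ‹Nonempty I›
    have := hfs i
    rw [h, inner_zero_right] at this
    nlinarith [hσ i]
  have hdpos : 0 < ‖dstar‖ ^ 2 := by
    have := norm_pos_iff.mpr hdne
    positivity
  refine ⟨⟨by linarith, by linarith⟩, hdne, fun i => ⟨hfs i, ?_⟩⟩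
  exact mul_neg_of_pos_of_neg (hσ i) hαneg
end

section
/- Let H be a real inner product space, I a finite nonempty index set, g : I → H, and σ : I → ℝ with σ_i > 0 for all i. Suppose λ* : I → ℝ minimizes ‖Σ_{i∈I} λ_i g_i‖² over the dual feasible set, and set u = Σ_{i∈I} λ*_i g_i. Then for every j ∈ I, ⟨g_j, u⟩ ≥ σ_j · ‖u‖². In particular, if u ≠ 0 then the direction d = −u satisfies ⟨g_j, d⟩ ≤ −σ_j‖u‖² < 0 for all j ∈ I, i.e., −u is a common descent direction for all objectives. -/
open RealInnerProductSpace

private lemma aux_nonneg (a b : ℝ) (h : ∀ t : ℝ, 0 < t → t ≤ 1 → 0 ≤ 2*t*a + t^2*b) :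
    0 ≤ a := by
  by_contra hneg
  push_neg at hneg
  rcases le_or_gt b 0 with hb | hb
  · have := h 1 one_pos le_rfl
    nlinarith
  · set t := min 1 (-a/b) with ht
    have hab : 0 < -a/b := div_pos (by linarith) hb
    have ht0 : 0 < t := lt_min one_pos hab
    have ht1 : t ≤ 1 := min_le_left _ _
    have htb : t ≤ -a/b := min_le_right _ _
    have hkey := h t ht0 ht1
    have h2 : t * b ≤ -a := (le_div_iff₀ hb).mp htb
    nlinarith [mul_le_mul_of_nonneg_left h2 ht0.le]

/-- if `λ*` minimizes `‖Σ λ i • g i‖²` over the dual feasible set and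
`u = Σ λ* i • g i`, then `⟪g j, u⟫ ≥ σ j * ‖u‖²` for every `j`; in particular, if
`u ≠ 0` then `d = -u` is a common descent direction: `⟪g j, -u⟫ ≤ -(σ j) * ‖u‖² < 0`. -/
theorem stmt_4 {H : Type*} [NormedAddCommGroup H] [InnerProductSpace ℝ H]
    {I : Type*} [Fintype I] [Nonempty I]
    (g : I → H) (σ : I → ℝ) (hσ : ∀ i, 0 < σ i)
    (lamstar : I → ℝ) (hstar_nonneg : ∀ i, 0 ≤ lamstar i)
    (hstar_sum : ∑ i, lamstar i * σ i = 1)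
    (hstar_min : ∀ lam : I → ℝ, (∀ i, 0 ≤ lam i) → ∑ i, lam i * σ i = 1 →
      ‖∑ i, lamstar i • g i‖ ^ 2 ≤ ‖∑ i, lam i • g i‖ ^ 2)
    (u : H) (hu : u = ∑ i, lamstar i • g i) :
    (∀ j, σ j * ‖u‖ ^ 2 ≤ ⟪g j, u⟫) ∧
    (u ≠ 0 → ∀ j, ⟪g j, -u⟫ ≤ -(σ j * ‖u‖ ^ 2) ∧ -(σ j * ‖u‖ ^ 2) < 0) := by
  classical
  have main : ∀ j, σ j * ‖u‖ ^ 2 ≤ ⟪g j, u⟫ := by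
    intro j
    set v : H := (σ j)⁻¹ • g j - u with hv
    have hinner : 0 ≤ ⟪u, v⟫ := by
      apply aux_nonneg _ (‖v‖^2)
      intro t ht0 ht1
      set lam : I → ℝ := fun i => (1 - t) * lamstar i + t * (if i = j then (σ j)⁻¹ else 0)
        with hlam
      have hnn : ∀ i, 0 ≤ lam i := by
        intro i
        have h1 : 0 ≤ (1 - t) * lamstar i :=
          mul_nonneg (by linarith) (hstar_nonneg i)
        have h2 : 0 ≤ t * (if i = j then (σ j)⁻¹ else 0) := by
          apply mul_nonneg ht0.le
          split
          · exact inv_nonneg.mpr (hσ j).le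
          · exact le_refl 0
        simp only [hlam]
        exact add_nonneg h1 h2
      have hsum : ∑ i, lam i * σ i = 1 := by
        simp only [hlam, add_mul, Finset.sum_add_distrib, mul_assoc, ← Finset.mul_sum,
          hstar_sum, ite_mul, zero_mul, Finset.sum_ite_eq', Finset.mem_univ, if_true,
          inv_mul_cancel₀ (hσ j).ne']
        ring
      have hvec : ∑ i, lam i • g i = u + t • v := by
        simp only [hlam, add_smul, Finset.sum_add_distrib, mul_smul, ← Finset.smul_sum,
          ite_smul, zero_smul, Finset.sum_ite_eq', Finset.mem_univ, if_true, ← hu, hv]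
        rw [smul_sub, sub_smul, one_smul]
        abel
      have hmin := hstar_min lam hnn hsum
      rw [← hu, hvec] at hmin
      have hexp : ‖u + t • v‖^2 = ‖u‖^2 + 2*t*⟪u,v⟫ + t^2*‖v‖^2 := by
        rw [norm_add_sq_real, real_inner_smul_right, norm_smul]
        simp [mul_pow, abs_of_pos ht0]
        ring
      rw [hexp] at hmin
      linarith
    have hexp : ⟪u, v⟫ = (σ j)⁻¹ * ⟪g j, u⟫ - ‖u‖^2 := by
      rw [hv, inner_sub_right, real_inner_smul_right, real_inner_self_eq_norm_sq,
        real_inner_comm]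
    rw [hexp] at hinner
    have hσj := hσ j
    have : ‖u‖^2 ≤ (σ j)⁻¹ * ⟪g j, u⟫ := by linarith
    calc σ j * ‖u‖^2 ≤ σ j * ((σ j)⁻¹ * ⟪g j, u⟫) :=
          mul_le_mul_of_nonneg_left this hσj.le
      _ = ⟪g j, u⟫ := by field_simp
  refine ⟨main, fun hune j => ?_⟩
  constructor
  · rw [inner_neg_right]
    linarith [main j]
  · have hn : 0 < ‖u‖ := norm_pos_iff.mpr hune
    have : 0 < ‖u‖^2 := pow_pos hn 2
    have := mul_pos (hσ j) this
    linarith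
end

section
/- Strong duality for the elastic steepest descent problem: let H be a real inner product space, I a finite nonempty index set, g : I → H, and σ : I → ℝ with σ_i > 0 for all i. If λ* minimizes ‖Σ_{i∈I} λ_i g_i‖² over the dual feasible set and u = Σ_{i∈I} λ*_i g_i, then the pair (d, α) = (−u, −‖u‖²) is feasible for the elastic steepest descent problem and minimizes α + (1/2)‖d‖² over all feasible pairs, with optimal value −(1/2)‖u‖². -/
open RealInnerProductSpace

/-!
Multiplying the primal constraints by a dual feasible `λ` and summing gives
`⟪Σ λ i • g i, d⟫ ≤ α`, so completing the square bounds every primal value below by `-½‖u‖²`.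
Feasibility of `(-u, -‖u‖²)` is the first-order optimality condition of `u` as the least-norm
point of the convex set `{Σ λ i • g i | λ dual feasible}`: `‖u‖² ≤ ⟪u, v⟫` for every `v` in it,
in particular for the points `v = σ i⁻¹ • g i`.
-/

open Finset

section

variable {H : Type*} [NormedAddCommGroup H] [InnerProductSpace ℝ H]

theorem norm_sq_le_inner_of_isMinOn_norm {K : Set H} (hK : Convex ℝ K) {u v : H} (hu : u ∈ K)
    (hmin : IsMinOn (‖·‖) K u) (hv : v ∈ K) : ‖u‖ ^ 2 ≤ ⟪u, v⟫ := by
  have : Nonempty K := ⟨⟨u, hu⟩⟩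
  have hinf : ‖0 - u‖ = ⨅ w : K, ‖0 - (w : H)‖ := by
    have hbdd : BddBelow (Set.range fun w : K => ‖(w : H)‖) :=
      ⟨0, by rintro _ ⟨w, rfl⟩; positivity⟩
    simp only [zero_sub, norm_neg]
    exact le_antisymm (le_ciInf fun w => isMinOn_iff.1 hmin w w.2) (ciInf_le hbdd ⟨u, hu⟩)
  have := (norm_eq_iInf_iff_real_inner_le_zero hK hu).1 hinf v hv
  rw [zero_sub, inner_neg_left, inner_sub_right, real_inner_self_eq_norm_sq] at this
  linarith

variable {I : Type*} [Fintype I]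

def dualFeasible (σ : I → ℝ) : Set (I → ℝ) :=
  {lam | (∀ i, 0 ≤ lam i) ∧ ∑ i, lam i * σ i = 1}

theorem convex_dualFeasible (σ : I → ℝ) : Convex ℝ (dualFeasible σ) := by
  rintro lam ⟨hlam_nonneg, hlam_sum⟩ mu ⟨hmu_nonneg, hmu_sum⟩ a b ha hb hab
  refine ⟨fun i => ?_, ?_⟩
  · simp only [Pi.add_apply, Pi.smul_apply, smul_eq_mul]
    have := hlam_nonneg i
    have := hmu_nonneg i
    positivity
  · simp only [Pi.add_apply, Pi.smul_apply, smul_eq_mul, add_mul, mul_assoc, sum_add_distrib,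
      ← mul_sum, hlam_sum, hmu_sum, mul_one, hab]

theorem single_inv_mem_dualFeasible [DecidableEq I] {σ : I → ℝ} {i : I} (hσ : 0 < σ i) :
    Pi.single i (σ i)⁻¹ ∈ dualFeasible σ := by
  refine ⟨fun j => ?_, ?_⟩
  · rcases eq_or_ne j i with rfl | hj
    · simpa using hσ.le
    · simp [hj]
  · rw [sum_eq_single i (fun j _ hj => by simp [hj]) (by simp)]
    simp [hσ.ne']

theorem inner_sum_smul_le_of_mem_dualFeasible {g : I → H} {σ : I → ℝ} {lam : I → ℝ}
    (hlam : lam ∈ dualFeasible σ) {d : H} {α : ℝ} (hd : ∀ i, ⟪g i, d⟫ ≤ σ i * α) :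
    ⟪∑ i, lam i • g i, d⟫ ≤ α :=
  calc ⟪∑ i, lam i • g i, d⟫ = ∑ i, lam i * ⟪g i, d⟫ := by
        simp only [sum_inner, real_inner_smul_left]
    _ ≤ ∑ i, lam i * (σ i * α) :=
        sum_le_sum fun i _ => mul_le_mul_of_nonneg_left (hd i) (hlam.1 i)
    _ = α := by simp only [← mul_assoc, ← sum_mul, hlam.2, one_mul]

theorem mul_norm_sq_le_inner_of_isMinOn {g : I → H} {σ : I → ℝ} {lamstar : I → ℝ}
    (hstar : lamstar ∈ dualFeasible σ)
    (hmin : IsMinOn (fun lam => ‖∑ j, lam j • g j‖) (dualFeasible σ) lamstar)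
    {i : I} (hσ : 0 < σ i) :
    σ i * ‖∑ j, lamstar j • g j‖ ^ 2 ≤ ⟪g i, ∑ j, lamstar j • g j⟫ := by
  classical
  set K := Fintype.linearCombination ℝ g '' dualFeasible σ
  have mem_K {lam} (hlam : lam ∈ dualFeasible σ) : ∑ j, lam j • g j ∈ K :=
    ⟨lam, hlam, Fintype.linearCombination_apply ℝ g lam⟩
  have hK : Convex ℝ K := (convex_dualFeasible σ).linear_image _
  have hmin_K : IsMinOn (‖·‖) K (∑ j, lamstar j • g j) := by
    rintro _ ⟨lam, hlam, rfl⟩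
    simpa [Fintype.linearCombination_apply] using isMinOn_iff.1 hmin lam hlam
  have hvertex : (σ i)⁻¹ • g i ∈ K := by
    simpa [Pi.single_apply] using mem_K (single_inv_mem_dualFeasible hσ)
  have := norm_sq_le_inner_of_isMinOn_norm hK (mem_K hstar) hmin_K hvertex
  rwa [real_inner_smul_right, le_inv_mul_iff₀ hσ, real_inner_comm] at this

end

theorem stmt_6_general {H : Type*} [NormedAddCommGroup H] [InnerProductSpace ℝ H]
    {I : Type*} [Fintype I]
    (g : I → H) (σ : I → ℝ) (hσ : ∀ i, 0 < σ i)
    (lamstar : I → ℝ) (hstar_nonneg : ∀ i, 0 ≤ lamstar i)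
    (hstar_sum : ∑ i, lamstar i * σ i = 1)
    (hstar_min : ∀ lam : I → ℝ, (∀ i, 0 ≤ lam i) → ∑ i, lam i * σ i = 1 →
      ‖∑ i, lamstar i • g i‖ ^ 2 ≤ ‖∑ i, lam i • g i‖ ^ 2)
    (u : H) (hu : u = ∑ i, lamstar i • g i) :
    (∀ i, ⟪g i, -u⟫ ≤ σ i * (-‖u‖ ^ 2)) ∧
    (∀ (d : H) (α : ℝ), (∀ i, ⟪g i, d⟫ ≤ σ i * α) →
      (-‖u‖ ^ 2) + (1 / 2) * ‖-u‖ ^ 2 ≤ α + (1 / 2) * ‖d‖ ^ 2) ∧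
    (-‖u‖ ^ 2) + (1 / 2) * ‖-u‖ ^ 2 = -((1 / 2) * ‖u‖ ^ 2) := by
  have hstar : lamstar ∈ dualFeasible σ := ⟨hstar_nonneg, hstar_sum⟩
  have hmin : IsMinOn (fun lam => ‖∑ i, lam i • g i‖) (dualFeasible σ) lamstar :=
    isMinOn_iff.2 fun lam hlam =>
      (pow_le_pow_iff_left₀ (norm_nonneg _) (norm_nonneg _) two_ne_zero).1
        (hstar_min lam hlam.1 hlam.2)
  subst hu
  refine ⟨fun i => ?_, fun d α hd => ?_, by rw [norm_neg]; ring⟩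
  · have := mul_norm_sq_le_inner_of_isMinOn hstar hmin (hσ i)
    rw [inner_neg_right]
    linarith
  · have hweak := inner_sum_smul_le_of_mem_dualFeasible hstar hd
    have hsq := norm_add_sq_real (∑ i, lamstar i • g i) d
    rw [norm_neg]
    linarith [sq_nonneg ‖∑ i, lamstar i • g i + d‖]

/-- strong duality: if `λ*` minimizes the dual objective and
`u = Σ λ* i • g i`, then `(d, α) = (-u, -‖u‖²)` is feasible for the elastic steepest
descent problem, minimizes `α + (1/2)‖d‖²` over all feasible pairs, and the optimal
value is `-(1/2)‖u‖²`. -/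
theorem stmt_6 {H : Type*} [NormedAddCommGroup H] [InnerProductSpace ℝ H]
    {I : Type*} [Fintype I] [Nonempty I]
    (g : I → H) (σ : I → ℝ) (hσ : ∀ i, 0 < σ i)
    (lamstar : I → ℝ) (hstar_nonneg : ∀ i, 0 ≤ lamstar i)
    (hstar_sum : ∑ i, lamstar i * σ i = 1)
    (hstar_min : ∀ lam : I → ℝ, (∀ i, 0 ≤ lam i) → ∑ i, lam i * σ i = 1 →
      ‖∑ i, lamstar i • g i‖ ^ 2 ≤ ‖∑ i, lam i • g i‖ ^ 2)
    (u : H) (hu : u = ∑ i, lamstar i • g i) :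
    (∀ i, ⟪g i, -u⟫ ≤ σ i * (-‖u‖ ^ 2)) ∧
    (∀ (d : H) (α : ℝ), (∀ i, ⟪g i, d⟫ ≤ σ i * α) →
      (-‖u‖ ^ 2) + (1 / 2) * ‖-u‖ ^ 2 ≤ α + (1 / 2) * ‖d‖ ^ 2) ∧
    (-‖u‖ ^ 2) + (1 / 2) * ‖-u‖ ^ 2 = -((1 / 2) * ‖u‖ ^ 2) :=
  stmt_6_general g σ hσ lamstar hstar_nonneg hstar_sum hstar_min u hu
end

section
/- Closed-form solution of the two-task MGDA problem: let g₁, g₂ be vectors in a real inner product space with g₁ ≠ g₂. Then λ₁* = max(min((⟨g₂, g₂⟩ − ⟨g₁, g₂⟩)/‖g₁ − g₂‖², 1), 0) minimizes f(λ) = ‖λ g₁ + (1 − λ) g₂‖² over λ ∈ [0, 1]; that is, for every λ ∈ [0, 1], f(λ₁*) ≤ f(λ). -/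
open RealInnerProductSpace

lemma quad_expand {H : Type*} [NormedAddCommGroup H] [InnerProductSpace ℝ H]
    (g₁ g₂ : H) (l : ℝ) :
    ‖l • g₁ + (1 - l) • g₂‖ ^ 2
      = ‖g₁ - g₂‖ ^ 2 * l ^ 2 + 2 * ⟪g₂, g₁ - g₂⟫ * l + ‖g₂‖ ^ 2 := by
  have h : l • g₁ + (1 - l) • g₂ = g₂ + l • (g₁ - g₂) := by
    rw [smul_sub, sub_smul, one_smul]; abel
  rw [h, ← real_inner_self_eq_norm_sq, ← real_inner_self_eq_norm_sq (g₁ - g₂),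
    ← real_inner_self_eq_norm_sq g₂, real_inner_add_add_self,
    real_inner_smul_right, real_inner_smul_left, real_inner_smul_right]
  ring

/-- closed-form solution of the two-task MGDA problem. For `g₁ ≠ g₂`,
`λ₁* = max (min ((⟪g₂, g₂⟫ - ⟪g₁, g₂⟫) / ‖g₁ - g₂‖²) 1) 0` minimizes
`f(λ) = ‖λ • g₁ + (1 - λ) • g₂‖²` over `λ ∈ [0, 1]`. -/
theorem stmt_7 {H : Type*} [NormedAddCommGroup H] [InnerProductSpace ℝ H]
    (g₁ g₂ : H) (hne : g₁ ≠ g₂)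
    (lamstar : ℝ)
    (hlamstar : lamstar = max (min ((⟪g₂, g₂⟫ - ⟪g₁, g₂⟫) / ‖g₁ - g₂‖ ^ 2) 1) 0) :
    ∀ lam ∈ Set.Icc (0 : ℝ) 1,
      ‖lamstar • g₁ + (1 - lamstar) • g₂‖ ^ 2 ≤ ‖lam • g₁ + (1 - lam) • g₂‖ ^ 2 := by
  intro lam hlam
  obtain ⟨hl0, hl1⟩ := hlam
  rw [quad_expand, quad_expand]
  set a : ℝ := ‖g₁ - g₂‖ ^ 2 with ha
  set b : ℝ := ⟪g₂, g₁ - g₂⟫ with hb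
  have hapos : 0 < a := by
    exact pow_pos (norm_pos_iff.mpr (sub_ne_zero.mpr hne)) 2
  have hnum : ⟪g₂, g₂⟫ - ⟪g₁, g₂⟫ = -b := by
    rw [hb, inner_sub_right, real_inner_comm g₂ g₁]; ring
  rw [hnum] at hlamstar
  set t : ℝ := -b / a with ht
  have htb : a * t = -b := by
    rw [ht]; field_simp
  rcases le_total t 0 with h0 | h0
  · have hls : lamstar = 0 := by
      rw [hlamstar, max_eq_right]
      exact le_trans (min_le_left _ _) h0
    have hbnn : 0 ≤ b := by nlinarith
    rw [hls]
    nlinarith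
  · rcases le_total 1 t with h1 | h1
    · have hls : lamstar = 1 := by
        rw [hlamstar, min_eq_right h1, max_eq_left (by norm_num)]
      have hble : b ≤ -a := by nlinarith
      rw [hls]
      nlinarith [mul_nonneg hapos.le (sq_nonneg (1 - lam)), mul_le_mul_of_nonneg_left hble (sub_nonneg.mpr hl1)]
    · have hls : lamstar = t := by
        rw [hlamstar, min_eq_left h1, max_eq_left h0]
      rw [hls]
      nlinarith [sq_nonneg (lam - t), htb]
end

section
/- MGDA prefers the task with the smaller gradient: let g₁, g₂ be vectors in a real inner product space with ‖g₁‖ > ‖g₂‖. Then every minimizer λ₁* of f(λ) = ‖λ g₁ + (1 − λ) g₂‖² over λ ∈ [0, 1] satisfies λ₁* < 1/2; equivalently, writing λ₂* = 1 − λ₁*, one has λ₁* < λ₂*. -/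
open RealInnerProductSpace

lemma expand_aux {H : Type*} [NormedAddCommGroup H] [InnerProductSpace ℝ H]
    (g₁ g₂ : H) (l : ℝ) :
    ‖l • g₁ + (1 - l) • g₂‖ ^ 2 =
      l ^ 2 * ‖g₁‖ ^ 2 + 2 * l * (1 - l) * ⟪g₁, g₂⟫ + (1 - l) ^ 2 * ‖g₂‖ ^ 2 := by
  rw [@norm_add_sq_real, real_inner_smul_left, real_inner_smul_right,
    norm_smul, norm_smul, mul_pow, mul_pow, Real.norm_eq_abs, Real.norm_eq_abs,
    sq_abs, sq_abs]
  ring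

/-- MGDA prefers the task with the smaller gradient. If `‖g₁‖ > ‖g₂‖`,
then every minimizer `λ₁*` of `f(λ) = ‖λ • g₁ + (1 - λ) • g₂‖²` over `[0, 1]` satisfies
`λ₁* < 1/2`, equivalently `λ₁* < λ₂* = 1 - λ₁*`. -/
theorem stmt_10 {H : Type*} [NormedAddCommGroup H] [InnerProductSpace ℝ H]
    (g₁ g₂ : H) (hnorm : ‖g₂‖ < ‖g₁‖)
    (lamstar : ℝ) (hmem : lamstar ∈ Set.Icc (0 : ℝ) 1)
    (hmin : ∀ lam ∈ Set.Icc (0 : ℝ) 1,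
      ‖lamstar • g₁ + (1 - lamstar) • g₂‖ ^ 2 ≤ ‖lam • g₁ + (1 - lam) • g₂‖ ^ 2) :
    lamstar < 1 / 2 ∧ lamstar < 1 - lamstar := by
  obtain ⟨h0, h1⟩ := hmem
  set a := ‖g₁‖ ^ 2 with ha
  set b := ‖g₂‖ ^ 2 with hb
  set c := (⟪g₁, g₂⟫ : ℝ) with hc
  have hab : b < a := by
    apply pow_lt_pow_left₀ hnorm (norm_nonneg _) two_ne_zero
  have hA : 0 ≤ a - 2 * c + b := by
    have := sq_nonneg ‖g₁ - g₂‖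
    rw [norm_sub_sq_real] at this
    linarith
  set A := a - 2 * c + b with hAdef
  have key : lamstar < 1 / 2 := by
    by_contra h
    push_neg at h
    -- compare with 1 - lamstar
    have hmem' : (1 - lamstar) ∈ Set.Icc (0 : ℝ) 1 := ⟨by linarith, by linarith⟩
    have h1' := hmin (1 - lamstar) hmem'
    rw [expand_aux, expand_aux] at h1'
    have heq : lamstar = 1 / 2 := by nlinarith
    -- now lamstar = 1/2, perturb to the left
    set ε := min (1 / 2) ((a - b) / (2 * (A + 1))) with hε
    have hεpos : 0 < ε := by
      apply lt_min (by norm_num)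
      apply div_pos (by linarith) (by linarith)
    have hεle : ε ≤ 1 / 2 := min_le_left _ _
    have hAε : A * ε < a - b := by
      have h2 : ε ≤ (a - b) / (2 * (A + 1)) := min_le_right _ _
      have h3 : A * ε ≤ A * ((a - b) / (2 * (A + 1))) := by
        apply mul_le_mul_of_nonneg_left h2 hA
      have h4 : A * ((a - b) / (2 * (A + 1))) < a - b := by
        rw [mul_div_assoc', div_lt_iff₀ (by linarith)]
        nlinarith
      exact h3.trans_lt h4
    have hmem2 : (1 / 2 - ε) ∈ Set.Icc (0 : ℝ) 1 := ⟨by linarith, by linarith⟩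
    have h2' := hmin (1 / 2 - ε) hmem2
    rw [expand_aux, expand_aux, heq] at h2'
    nlinarith
  exact ⟨key, by linarith⟩
end

section
/- Boundary case of the two-task EMGD problem: let g₁, g₂ be vectors in a real inner product space and σ₁, σ₂ > 0. If σ₁⟨g₂, g₂⟩ < σ₂⟨g₁, g₂⟩, then (λ₁, λ₂) = (0, 1/σ₂) minimizes ‖λ₁ g₁ + λ₂ g₂‖² over all (λ₁, λ₂) with λ₁ ≥ 0, λ₂ ≥ 0 and λ₁σ₁ + λ₂σ₂ = 1. -/
open RealInnerProductSpace

/-!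
Eliminating `λ₂` through the constraint, the feasible points are
`λ₁ • g₁ + λ₂ • g₂ = (1 / σ₂) • g₂ + (λ₁ / σ₂) • (σ₂ • g₁ - σ₁ • g₂)` with `λ₁ ≥ 0`, a ray issuing from
the candidate minimizer `(1 / σ₂) • g₂`. The hypothesis says exactly that the direction of this ray
makes a nonnegative inner product with its origin, so the norm cannot decrease along it.
-/

theorem norm_le_norm_add_smul_of_inner_nonneg {H : Type*} [NormedAddCommGroup H]
    [InnerProductSpace ℝ H] {u d : H} (hud : 0 ≤ ⟪u, d⟫) {t : ℝ} (ht : 0 ≤ t) :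
    ‖u‖ ≤ ‖u + t • d‖ := by
  have hsq : ‖u + t • d‖ ^ 2 = ‖u‖ ^ 2 + 2 * t * ⟪u, d⟫ + t ^ 2 * ‖d‖ ^ 2 := by
    rw [norm_add_sq_real, norm_smul, real_inner_smul_right, Real.norm_eq_abs, mul_pow, sq_abs]
    ring
  refine le_of_pow_le_pow_left₀ two_ne_zero (norm_nonneg _) ?_
  rw [hsq]
  nlinarith [mul_nonneg ht hud, mul_nonneg (sq_nonneg t) (sq_nonneg ‖d‖)]

theorem stmt_11_general {H : Type*} [NormedAddCommGroup H] [InnerProductSpace ℝ H]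
    (g₁ g₂ : H) (σ₁ σ₂ : ℝ) (hσ₂ : 0 < σ₂)
    (h : σ₁ * ⟪g₂, g₂⟫ < σ₂ * ⟪g₁, g₂⟫) :
    ∀ lam₁ lam₂ : ℝ, 0 ≤ lam₁ → 0 ≤ lam₂ → lam₁ * σ₁ + lam₂ * σ₂ = 1 →
      ‖(0 : ℝ) • g₁ + (1 / σ₂) • g₂‖ ^ 2 ≤ ‖lam₁ • g₁ + lam₂ • g₂‖ ^ 2 := by
  intro lam₁ lam₂ hlam₁ _ hsum
  have hlam₂ : lam₂ = (1 - lam₁ * σ₁) / σ₂ := by field_simp; linarith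
  have hray : lam₁ • g₁ + lam₂ • g₂ =
      (1 / σ₂) • g₂ + (lam₁ / σ₂) • (σ₂ • g₁ - σ₁ • g₂) := by
    rw [hlam₂]
    match_scalars <;> field_simp; ring
  have hinner : 0 ≤ ⟪(1 / σ₂) • g₂, σ₂ • g₁ - σ₁ • g₂⟫ := by
    have hexpand : ⟪(1 / σ₂) • g₂, σ₂ • g₁ - σ₁ • g₂⟫ =
        (1 / σ₂) * (σ₂ * ⟪g₁, g₂⟫ - σ₁ * ⟪g₂, g₂⟫) := by
      simp only [inner_sub_right, real_inner_smul_left, real_inner_smul_right,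
        real_inner_comm g₁ g₂]
      ring
    rw [hexpand]
    exact mul_nonneg (by positivity) (by linarith)
  rw [zero_smul, zero_add, hray]
  gcongr
  exact norm_le_norm_add_smul_of_inner_nonneg hinner (div_nonneg hlam₁ hσ₂.le)

/-- boundary case of the two-task EMGD problem: if
`σ₁⟪g₂, g₂⟫ < σ₂⟪g₁, g₂⟫`, then `(λ₁, λ₂) = (0, 1/σ₂)` minimizes `‖λ₁ • g₁ + λ₂ • g₂‖²`
over all nonnegative `(λ₁, λ₂)` with `λ₁σ₁ + λ₂σ₂ = 1`. -/
theorem stmt_11 {H : Type*} [NormedAddCommGroup H] [InnerProductSpace ℝ H]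
    (g₁ g₂ : H) (σ₁ σ₂ : ℝ) (hσ₁ : 0 < σ₁) (hσ₂ : 0 < σ₂)
    (h : σ₁ * ⟪g₂, g₂⟫ < σ₂ * ⟪g₁, g₂⟫) :
    ∀ lam₁ lam₂ : ℝ, 0 ≤ lam₁ → 0 ≤ lam₂ → lam₁ * σ₁ + lam₂ * σ₂ = 1 →
      ‖(0 : ℝ) • g₁ + (1 / σ₂) • g₂‖ ^ 2 ≤ ‖lam₁ • g₁ + lam₂ • g₂‖ ^ 2 :=
  stmt_11_general g₁ g₂ σ₁ σ₂ hσ₂ h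
end

section
/- Boundary case of the two-task EMGD problem: let g₁, g₂ be vectors in a real inner product space and σ₁, σ₂ > 0. If σ₂⟨g₁, g₁⟩ < σ₁⟨g₁, g₂⟩, then (λ₁, λ₂) = (1/σ₁, 0) minimizes ‖λ₁ g₁ + λ₂ g₂‖² over all (λ₁, λ₂) with λ₁ ≥ 0, λ₂ ≥ 0 and λ₁σ₁ + λ₂σ₂ = 1. -/
open RealInnerProductSpace

/-- boundary case of the two-task EMGD problem: if
`σ₂⟪g₁, g₁⟫ < σ₁⟪g₁, g₂⟫`, then `(λ₁, λ₂) = (1/σ₁, 0)` minimizes `‖λ₁ • g₁ + λ₂ • g₂‖²`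
over all nonnegative `(λ₁, λ₂)` with `λ₁σ₁ + λ₂σ₂ = 1`. -/
theorem stmt_12 {H : Type*} [NormedAddCommGroup H] [InnerProductSpace ℝ H]
    (g₁ g₂ : H) (σ₁ σ₂ : ℝ) (hσ₁ : 0 < σ₁) (hσ₂ : 0 < σ₂)
    (h : σ₂ * ⟪g₁, g₁⟫ < σ₁ * ⟪g₁, g₂⟫) :
    ∀ lam₁ lam₂ : ℝ, 0 ≤ lam₁ → 0 ≤ lam₂ → lam₁ * σ₁ + lam₂ * σ₂ = 1 →
      ‖(1 / σ₁) • g₁ + (0 : ℝ) • g₂‖ ^ 2 ≤ ‖lam₁ • g₁ + lam₂ • g₂‖ ^ 2 := by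
  intro lam₁ lam₂ h₁ h₂ hc
  set a := ⟪g₁, g₁⟫ with ha
  set b := ⟪g₁, g₂⟫ with hb
  set c := ⟪g₂, g₂⟫ with hcc
  have hcomm : ⟪g₂, g₁⟫ = b := real_inner_comm g₁ g₂
  have key : ∀ l₁ l₂ : ℝ, ‖l₁ • g₁ + l₂ • g₂‖ ^ 2
      = l₁ ^ 2 * a + 2 * l₁ * l₂ * b + l₂ ^ 2 * c := by
    intro l₁ l₂
    rw [← real_inner_self_eq_norm_sq]
    simp only [inner_add_left, inner_add_right, real_inner_smul_left,
      real_inner_smul_right, hcomm, ← ha, ← hb, ← hcc]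
    ring
  rw [key, key]
  have ha0 : 0 ≤ a := real_inner_self_nonneg
  have hc0 : 0 ≤ c := real_inner_self_nonneg
  have hcs : b * b ≤ a * c := real_inner_mul_inner_self_le g₁ g₂
  have hapos : 0 < a := by
    rcases lt_or_eq_of_le ha0 with h' | h'
    · exact h'
    · exfalso
      have hb0 : 0 < b := by
        have := h
        rw [← h'] at this
        nlinarith
      nlinarith
  have hbpos : 0 < b := by nlinarith
  have hu : lam₁ * σ₁ = 1 - lam₂ * σ₂ := by linarith
  have e1 : 0 ≤ σ₁ * b - σ₂ * a := by linarith
  have e2 : 0 ≤ a * (σ₂ ^ 2 * a - 2 * σ₂ * σ₁ * b + σ₁ ^ 2 * c) := by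
    nlinarith [sq_nonneg (σ₂ * a - σ₁ * b), hcs]
  have e3 : 0 ≤ σ₂ ^ 2 * a - 2 * σ₂ * σ₁ * b + σ₁ ^ 2 * c := by
    nlinarith [e2, hapos]
  have hbr : 0 ≤ lam₂ * σ₂ ^ 2 * a - 2 * σ₂ * a
      + 2 * (1 - lam₂ * σ₂) * σ₁ * b + lam₂ * σ₁ ^ 2 * c := by
    have := mul_nonneg h₂ e3
    nlinarith [this, e1]
  have hid : (lam₁ ^ 2 * a + 2 * lam₁ * lam₂ * b + lam₂ ^ 2 * c) * σ₁ ^ 2 - a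
      = lam₂ * (lam₂ * σ₂ ^ 2 * a - 2 * σ₂ * a
        + 2 * (1 - lam₂ * σ₂) * σ₁ * b + lam₂ * σ₁ ^ 2 * c) := by
    linear_combination (a * (lam₁ * σ₁ + 1 - lam₂ * σ₂) + 2 * lam₂ * σ₁ * b) * hu
  have hfin : a ≤ (lam₁ ^ 2 * a + 2 * lam₁ * lam₂ * b + lam₂ ^ 2 * c) * σ₁ ^ 2 := by
    nlinarith [mul_nonneg h₂ hbr, hid]
  have hlhs : (1 / σ₁) ^ 2 * a + 2 * (1 / σ₁) * 0 * b + 0 ^ 2 * c = a / σ₁ ^ 2 := by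
    ring
  rw [hlhs, div_le_iff₀ (by positivity)]
  exact hfin
end

section
/- Interior closed-form solution of the two-task EMGD problem: let g₁, g₂ be vectors in a real inner product space and σ₁, σ₂ > 0 with σ₂ g₁ ≠ σ₁ g₂. If σ₁⟨g₂, g₂⟩ ≥ σ₂⟨g₁, g₂⟩ and σ₂⟨g₁, g₁⟩ ≥ σ₁⟨g₁, g₂⟩, then the pair λ₁* = (σ₁⟨g₂, g₂⟩ − σ₂⟨g₁, g₂⟩)/‖σ₂ g₁ − σ₁ g₂‖² and λ₂* = (σ₂⟨g₁, g₁⟩ − σ₁⟨g₁, g₂⟩)/‖σ₂ g₁ − σ₁ g₂‖² satisfies λ₁* ≥ 0, λ₂* ≥ 0, λ₁*σ₁ + λ₂*σ₂ = 1, and minimizes ‖λ₁ g₁ + λ₂ g₂‖² over all (λ₁, λ₂) with λ₁ ≥ 0, λ₂ ≥ 0 and λ₁σ₁ + λ₂σ₂ = 1. -/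
/-!
Since `λ*` is feasible, every feasible `λ` differs from it by some `d` with
`d₁σ₁ + d₂σ₂ = 0`. The closed form is chosen so that `v* = λ₁* g₁ + λ₂* g₂` satisfies the
stationarity condition `⟪v*, gᵢ⟫ = μ σᵢ` (with `μ = (⟪g₁,g₁⟫⟪g₂,g₂⟫ - ⟪g₁,g₂⟫²) / ‖σ₂ g₁ - σ₁ g₂‖²`),
so `v*` is orthogonal to `d₁ g₁ + d₂ g₂` and Pythagoras gives
`‖λ₁ g₁ + λ₂ g₂‖² = ‖v*‖² + ‖d₁ g₁ + d₂ g₂‖² ≥ ‖v*‖²`.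
-/

open RealInnerProductSpace

section TwoTask

variable {H : Type*} [NormedAddCommGroup H] [InnerProductSpace ℝ H] (g₁ g₂ : H) (σ₁ σ₂ : ℝ)

theorem norm_smul_sub_smul_sq :
    ‖σ₂ • g₁ - σ₁ • g₂‖ ^ 2
      = σ₂ ^ 2 * ⟪g₁, g₁⟫ - 2 * σ₁ * σ₂ * ⟪g₁, g₂⟫ + σ₁ ^ 2 * ⟪g₂, g₂⟫ := by
  rw [← real_inner_self_eq_norm_sq]
  simp only [inner_sub_left, inner_sub_right, real_inner_smul_left, real_inner_smul_right,
    real_inner_comm g₂ g₁]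
  ring

theorem inner_closedForm_eq_mul :
    ⟪((σ₁ * ⟪g₂, g₂⟫ - σ₂ * ⟪g₁, g₂⟫) / ‖σ₂ • g₁ - σ₁ • g₂‖ ^ 2) • g₁
        + ((σ₂ * ⟪g₁, g₁⟫ - σ₁ * ⟪g₁, g₂⟫) / ‖σ₂ • g₁ - σ₁ • g₂‖ ^ 2) • g₂, g₁⟫
      = (⟪g₁, g₁⟫ * ⟪g₂, g₂⟫ - ⟪g₁, g₂⟫ ^ 2) / ‖σ₂ • g₁ - σ₁ • g₂‖ ^ 2 * σ₁ ∧
    ⟪((σ₁ * ⟪g₂, g₂⟫ - σ₂ * ⟪g₁, g₂⟫) / ‖σ₂ • g₁ - σ₁ • g₂‖ ^ 2) • g₁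
        + ((σ₂ * ⟪g₁, g₁⟫ - σ₁ * ⟪g₁, g₂⟫) / ‖σ₂ • g₁ - σ₁ • g₂‖ ^ 2) • g₂, g₂⟫
      = (⟪g₁, g₁⟫ * ⟪g₂, g₂⟫ - ⟪g₁, g₂⟫ ^ 2) / ‖σ₂ • g₁ - σ₁ • g₂‖ ^ 2 * σ₂ := by
  simp only [inner_add_left, real_inner_smul_left, real_inner_comm g₁ g₂]
  constructor <;> ring

variable {g₁ g₂ σ₁ σ₂}

theorem norm_sq_le_of_inner_eq_mul {lam₁ lam₂ lam₁' lam₂' μ : ℝ}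
    (hg₁ : ⟪lam₁ • g₁ + lam₂ • g₂, g₁⟫ = μ * σ₁) (hg₂ : ⟪lam₁ • g₁ + lam₂ • g₂, g₂⟫ = μ * σ₂)
    (hσ : lam₁ * σ₁ + lam₂ * σ₂ = lam₁' * σ₁ + lam₂' * σ₂) :
    ‖lam₁ • g₁ + lam₂ • g₂‖ ^ 2 ≤ ‖lam₁' • g₁ + lam₂' • g₂‖ ^ 2 := by
  set v := lam₁ • g₁ + lam₂ • g₂
  set d := (lam₁' - lam₁) • g₁ + (lam₂' - lam₂) • g₂
  have hvd : lam₁' • g₁ + lam₂' • g₂ = v + d := by module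
  have horth : ⟪v, d⟫ = 0 := by
    simp only [d, inner_add_right, real_inner_smul_right, hg₁, hg₂]
    linear_combination -μ * hσ
  rw [hvd, sq, sq, norm_add_sq_eq_norm_sq_add_norm_sq_real horth]
  exact le_add_of_nonneg_right (mul_self_nonneg _)

theorem closedForm_feasible (hne : σ₂ • g₁ ≠ σ₁ • g₂) :
    (σ₁ * ⟪g₂, g₂⟫ - σ₂ * ⟪g₁, g₂⟫) / ‖σ₂ • g₁ - σ₁ • g₂‖ ^ 2 * σ₁
      + (σ₂ * ⟪g₁, g₁⟫ - σ₁ * ⟪g₁, g₂⟫) / ‖σ₂ • g₁ - σ₁ • g₂‖ ^ 2 * σ₂ = 1 := by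
  have hD : ‖σ₂ • g₁ - σ₁ • g₂‖ ^ 2 ≠ 0 := pow_ne_zero 2 (norm_ne_zero_iff.2 (sub_ne_zero.2 hne))
  rw [div_mul_eq_mul_div, div_mul_eq_mul_div, ← add_div, div_eq_one_iff_eq hD,
    norm_smul_sub_smul_sq]
  ring

end TwoTask

theorem stmt_13_general {H : Type*} [NormedAddCommGroup H] [InnerProductSpace ℝ H]
    (g₁ g₂ : H) (σ₁ σ₂ : ℝ)
    (hne : σ₂ • g₁ ≠ σ₁ • g₂)
    (h₁ : σ₂ * ⟪g₁, g₂⟫ ≤ σ₁ * ⟪g₂, g₂⟫)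
    (h₂ : σ₁ * ⟪g₁, g₂⟫ ≤ σ₂ * ⟪g₁, g₁⟫)
    (lam₁star lam₂star : ℝ)
    (hl₁ : lam₁star = (σ₁ * ⟪g₂, g₂⟫ - σ₂ * ⟪g₁, g₂⟫) / ‖σ₂ • g₁ - σ₁ • g₂‖ ^ 2)
    (hl₂ : lam₂star = (σ₂ * ⟪g₁, g₁⟫ - σ₁ * ⟪g₁, g₂⟫) / ‖σ₂ • g₁ - σ₁ • g₂‖ ^ 2) :
    0 ≤ lam₁star ∧ 0 ≤ lam₂star ∧ lam₁star * σ₁ + lam₂star * σ₂ = 1 ∧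
    ∀ lam₁ lam₂ : ℝ, 0 ≤ lam₁ → 0 ≤ lam₂ → lam₁ * σ₁ + lam₂ * σ₂ = 1 →
      ‖lam₁star • g₁ + lam₂star • g₂‖ ^ 2 ≤ ‖lam₁ • g₁ + lam₂ • g₂‖ ^ 2 := by
  subst hl₁ hl₂
  have hfeas := closedForm_feasible hne
  obtain ⟨hstat₁, hstat₂⟩ := inner_closedForm_eq_mul g₁ g₂ σ₁ σ₂
  refine ⟨div_nonneg (sub_nonneg.2 h₁) (sq_nonneg _), div_nonneg (sub_nonneg.2 h₂) (sq_nonneg _),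
    hfeas, fun lam₁ lam₂ _ _ hlam => ?_⟩
  exact norm_sq_le_of_inner_eq_mul hstat₁ hstat₂ (hfeas.trans hlam.symm)

/-- interior closed-form solution of the two-task EMGD problem: if
`σ₂ • g₁ ≠ σ₁ • g₂`, `σ₁⟪g₂, g₂⟫ ≥ σ₂⟪g₁, g₂⟫` and `σ₂⟪g₁, g₁⟫ ≥ σ₁⟪g₁, g₂⟫`, then
`λ₁* = (σ₁⟪g₂, g₂⟫ - σ₂⟪g₁, g₂⟫)/‖σ₂ • g₁ - σ₁ • g₂‖²` and
`λ₂* = (σ₂⟪g₁, g₁⟫ - σ₁⟪g₁, g₂⟫)/‖σ₂ • g₁ - σ₁ • g₂‖²` form a feasible pair minimizing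
`‖λ₁ • g₁ + λ₂ • g₂‖²` over all nonnegative `(λ₁, λ₂)` with `λ₁σ₁ + λ₂σ₂ = 1`. -/
theorem stmt_13 {H : Type*} [NormedAddCommGroup H] [InnerProductSpace ℝ H]
    (g₁ g₂ : H) (σ₁ σ₂ : ℝ) (hσ₁ : 0 < σ₁) (hσ₂ : 0 < σ₂)
    (hne : σ₂ • g₁ ≠ σ₁ • g₂)
    (h₁ : σ₂ * ⟪g₁, g₂⟫ ≤ σ₁ * ⟪g₂, g₂⟫)
    (h₂ : σ₁ * ⟪g₁, g₂⟫ ≤ σ₂ * ⟪g₁, g₁⟫)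
    (lam₁star lam₂star : ℝ)
    (hl₁ : lam₁star = (σ₁ * ⟪g₂, g₂⟫ - σ₂ * ⟪g₁, g₂⟫) / ‖σ₂ • g₁ - σ₁ • g₂‖ ^ 2)
    (hl₂ : lam₂star = (σ₂ * ⟪g₁, g₁⟫ - σ₁ * ⟪g₁, g₂⟫) / ‖σ₂ • g₁ - σ₁ • g₂‖ ^ 2) :
    0 ≤ lam₁star ∧ 0 ≤ lam₂star ∧ lam₁star * σ₁ + lam₂star * σ₂ = 1 ∧
    ∀ lam₁ lam₂ : ℝ, 0 ≤ lam₁ → 0 ≤ lam₂ → lam₁ * σ₁ + lam₂ * σ₂ = 1 →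
      ‖lam₁star • g₁ + lam₂star • g₂‖ ^ 2 ≤ ‖lam₁ • g₁ + lam₂ • g₂‖ ^ 2 :=
  stmt_13_general g₁ g₂ σ₁ σ₂ hne h₁ h₂ lam₁star lam₂star hl₁ hl₂
end

section
/- Convergence of elastic multi-gradient descent to a Pareto critical point: let H be a real inner product space, I a finite nonempty index set, and σ : I → ℝ with σ_i > 0 for all i. For each i ∈ I let ℓ_i : H → ℝ be differentiable with continuous gradient ∇ℓ_i : H → H. Let γ > 0, let (θ_k) be a sequence in H, and for each k let (d_k, α_k) ∈ H × ℝ minimize α + (1/2)‖d‖² over all pairs (d, α) satisfying ⟨∇ℓ_i(θ_k), d⟩ ≤ σ_i · α for all i ∈ I. Assume the sufficient decrease condition: for all i ∈ I and all k, ℓ_i(θ_{k+1}) ≤ ℓ_i(θ_k) + γ · ⟨∇ℓ_i(θ_k), d_k⟩. If θ̂ ∈ H is an accumulation point of (θ_k) (i.e., some subsequence of (θ_k) converges to θ̂), then θ̂ is Pareto critical: there is no d ∈ H with ⟨∇ℓ_i(θ̂), d⟩ < 0 for all i ∈ I. -/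
open RealInnerProductSpace

/-- convergence of elastic multi-gradient descent to a Pareto critical
point: each `ℓ i` is differentiable with continuous gradient `gradℓ i`; `(d k, α k)`
solves the elastic steepest descent problem at `θ k`; the sufficient decrease condition
`ℓ i (θ (k+1)) ≤ ℓ i (θ k) + γ * ⟪gradℓ i (θ k), d k⟫` holds. Then every accumulation
point `θhat` of `(θ k)` is Pareto critical: no common descent direction exists at `θhat`. -/
theorem stmt_17 {H : Type*} [NormedAddCommGroup H] [InnerProductSpace ℝ H]
    {I : Type*} [Fintype I] [Nonempty I]
    (σ : I → ℝ) (hσ : ∀ i, 0 < σ i)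
    (ℓ : I → H → ℝ) (gradℓ : I → H → H)
    (hdiff : ∀ i x, HasFDerivAt (ℓ i) ((innerSL ℝ) (gradℓ i x)) x)
    (hcont : ∀ i, Continuous (gradℓ i))
    (γ : ℝ) (hγ : 0 < γ)
    (θ : ℕ → H) (d : ℕ → H) (α : ℕ → ℝ)
    (hfeas : ∀ k i, ⟪gradℓ i (θ k), d k⟫ ≤ σ i * α k)
    (hmin : ∀ k, ∀ (d' : H) (α' : ℝ), (∀ i, ⟪gradℓ i (θ k), d'⟫ ≤ σ i * α') →
      α k + (1 / 2) * ‖d k‖ ^ 2 ≤ α' + (1 / 2) * ‖d'‖ ^ 2)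
    (hdecr : ∀ i k, ℓ i (θ (k + 1)) ≤ ℓ i (θ k) + γ * ⟪gradℓ i (θ k), d k⟫)
    (θhat : H)
    (hacc : ∃ φ : ℕ → ℕ, StrictMono φ ∧
      Filter.Tendsto (fun n => θ (φ n)) Filter.atTop (nhds θhat)) :
    ¬ ∃ dd : H, ∀ i, ⟪gradℓ i θhat, dd⟫ < 0 := by
  rintro ⟨dd, hdd⟩
  obtain ⟨φ, hφ, hθ⟩ := hacc
  -- basic bounds from optimality (the pair (0,0) is feasible)
  have hval : ∀ k, α k + (1 / 2) * ‖d k‖ ^ 2 ≤ 0 := by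
    intro k
    have := hmin k 0 0 (by intro i; simp)
    simpa using this
  have hα0 : ∀ k, α k ≤ 0 := fun k => by nlinarith [hval k, sq_nonneg ‖d k‖]
  have hinner_le : ∀ k i, ⟪gradℓ i (θ k), d k⟫ ≤ 0 := fun k i =>
    (hfeas k i).trans (by nlinarith [hα0 k, (hσ i).le])
  have hℓcont : ∀ i, Continuous (ℓ i) :=
    fun i => continuous_iff_continuousAt.2 fun x => (hdiff i x).continuousAt
  have hanti : ∀ i, Antitone (fun k => ℓ i (θ k)) := fun i =>
    antitone_nat_of_succ_le fun k => (hdecr i k).trans (by nlinarith [hinner_le k i])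
  -- full convergence of ℓ i (θ k) to ℓ i θhat
  have hℓlim : ∀ i, Filter.Tendsto (fun k => ℓ i (θ k)) Filter.atTop (nhds (ℓ i θhat)) := by
    intro i
    have hsub : Filter.Tendsto (fun n => ℓ i (θ (φ n))) Filter.atTop (nhds (ℓ i θhat)) :=
      ((hℓcont i).tendsto θhat).comp hθ
    have hantisub : Antitone (fun n => ℓ i (θ (φ n))) :=
      (hanti i).comp_monotone hφ.monotone
    have hlb : ∀ k, ℓ i θhat ≤ ℓ i (θ k) := by
      intro k
      have h1 : ℓ i θhat ≤ ℓ i (θ (φ k)) := hantisub.le_of_tendsto hsub k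
      exact h1.trans (hanti i hφ.le_apply)
    rw [Metric.tendsto_atTop]
    intro ε hε
    obtain ⟨N, hN⟩ := Metric.tendsto_atTop.1 hsub ε hε
    refine ⟨φ N, fun k hk => ?_⟩
    have h1 : ℓ i (θ k) ≤ ℓ i (θ (φ N)) := hanti i hk
    have h2 := hN N le_rfl
    rw [Real.dist_eq, abs_lt] at h2 ⊢
    have h3 := hlb k
    constructor <;> linarith [h2.1, h2.2]
  -- α k → 0
  obtain ⟨i0⟩ := ‹Nonempty I›
  have hγσ : 0 < γ * σ i0 := mul_pos hγ (hσ i0)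
  have hlow : Filter.Tendsto (fun k => (ℓ i0 (θ (k + 1)) - ℓ i0 (θ k)) / (γ * σ i0))
      Filter.atTop (nhds 0) := by
    have h1 : Filter.Tendsto (fun k => ℓ i0 (θ (k + 1))) Filter.atTop (nhds (ℓ i0 θhat)) :=
      (hℓlim i0).comp (Filter.tendsto_add_atTop_nat 1)
    have := (h1.sub (hℓlim i0)).div_const (γ * σ i0)
    simpa using this
  have hαlim : Filter.Tendsto α Filter.atTop (nhds 0) := by
    refine tendsto_of_tendsto_of_tendsto_of_le_of_le hlow tendsto_const_nhds ?_ hα0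
    intro k
    have h1 := hdecr i0 k
    have h2 : γ * ⟪gradℓ i0 (θ k), d k⟫ ≤ γ * (σ i0 * α k) :=
      mul_le_mul_of_nonneg_left (hfeas k i0) hγ.le
    rw [div_le_iff₀ hγσ]
    nlinarith
  -- ‖d k‖ ^ 2 → 0
  have hdlim : Filter.Tendsto (fun k => ‖d k‖ ^ 2) Filter.atTop (nhds 0) := by
    have hub : Filter.Tendsto (fun k => (-2 : ℝ) * α k) Filter.atTop (nhds 0) := by
      have := hαlim.const_mul (-2 : ℝ)
      simpa using this
    refine tendsto_of_tendsto_of_tendsto_of_le_of_le tendsto_const_nhds hub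
      (fun k => sq_nonneg _) (fun k => by nlinarith [hval k])
  have hv : Filter.Tendsto (fun k => α k + (1 / 2) * ‖d k‖ ^ 2) Filter.atTop (nhds 0) := by
    have := hαlim.add (hdlim.const_mul (1 / 2 : ℝ))
    simpa [mul_comm] using this
  have hvφ : Filter.Tendsto (fun n => α (φ n) + (1 / 2) * ‖d (φ n)‖ ^ 2)
      Filter.atTop (nhds 0) := hv.comp hφ.tendsto_atTop
  -- constants
  set M : ℝ := Finset.univ.sup' Finset.univ_nonempty (fun i => ⟪gradℓ i θhat, dd⟫) with hMdef
  have hM : M < 0 := by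
    rw [hMdef, Finset.sup'_lt_iff]
    exact fun i _ => hdd i
  set S : ℝ := Finset.univ.sup' Finset.univ_nonempty σ with hSdef
  have hS : 0 < S := lt_of_lt_of_le (hσ i0) (Finset.le_sup' σ (Finset.mem_univ i0))
  have hσS : ∀ i, σ i ≤ S := fun i => Finset.le_sup' σ (Finset.mem_univ i)
  have hdd0 : dd ≠ 0 := by
    intro h
    have := hdd i0
    rw [h, inner_zero_right] at this
    exact lt_irrefl _ this
  have hnd : (0 : ℝ) < ‖dd‖ := norm_pos_iff.2 hdd0
  set ε : ℝ := -M / 2 with hεdef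
  have hε : 0 < ε := by rw [hεdef]; linarith
  set t : ℝ := ε / (S * ‖dd‖ ^ 2) with htdef
  have ht : 0 < t := div_pos hε (by positivity)
  set c : ℝ := (1 / 2) * ε ^ 2 / (S ^ 2 * ‖dd‖ ^ 2) with hcdef
  have hc : 0 < c := by rw [hcdef]; positivity
  -- eventually all inner products along the subsequence are < -ε
  have hev : ∀ᶠ n in Filter.atTop, ∀ i, ⟪gradℓ i (θ (φ n)), dd⟫ < -ε := by
    rw [Filter.eventually_all]
    intro i
    have htend : Filter.Tendsto (fun n => ⟪gradℓ i (θ (φ n)), dd⟫) Filter.atTop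
        (nhds ⟪gradℓ i θhat, dd⟫) := by
      have hcf : Continuous (fun x : H => ⟪gradℓ i x, dd⟫) :=
        (hcont i).inner continuous_const
      exact (hcf.tendsto θhat).comp hθ
    have hlt : ⟪gradℓ i θhat, dd⟫ < -ε := by
      have := Finset.le_sup' (fun i => ⟪gradℓ i θhat, dd⟫) (Finset.mem_univ i)
      rw [hεdef]; linarith [this]
    exact htend.eventually_lt_const hlt
  have hev2 : ∀ᶠ n in Filter.atTop, -c < α (φ n) + (1 / 2) * ‖d (φ n)‖ ^ 2 :=
    hvφ.eventually_const_lt (by linarith)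
  obtain ⟨n, h1, h2⟩ := (hev.and hev2).exists
  -- build the feasible competitor (t • dd, -(t*ε)/S)
  have hfeas' : ∀ i, ⟪gradℓ i (θ (φ n)), t • dd⟫ ≤ σ i * (-(t * ε) / S) := by
    intro i
    rw [real_inner_smul_right]
    have h3 : ⟪gradℓ i (θ (φ n)), dd⟫ < -ε := h1 i
    have h4 : t * ⟪gradℓ i (θ (φ n)), dd⟫ ≤ t * (-ε) :=
      mul_le_mul_of_nonneg_left h3.le ht.le
    have h5 : σ i * (-(t * ε) / S) = -(t * ε) * (σ i / S) := by ring
    have h6 : σ i / S ≤ 1 := (div_le_one hS).2 (hσS i)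
    nlinarith [mul_pos ht hε, hσ i, (hσ i).le, div_pos (hσ i) hS]
  have hopt := hmin (φ n) (t • dd) (-(t * ε) / S) hfeas'
  have hnorm : ‖t • dd‖ = t * ‖dd‖ := by
    rw [norm_smul, Real.norm_eq_abs, abs_of_pos ht]
  have hvalue : -(t * ε) / S + (1 / 2) * ‖t • dd‖ ^ 2 = -c := by
    rw [hnorm, htdef, hcdef]
    field_simp
    ring
  rw [hvalue] at hopt
  linarith
end
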